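/- For every n ≥ 1 and all nonzero finitely supported x, x′ ∈ ℓ², the following estimate holds: |Σ_{k=0}^{n−1} (−1)^k Σ_i (KP^{n−1−k} x)(i) · (KP^k x′)(i)| ≤ 2^{n−1} · ‖x‖₂ · ‖x′‖₂. -/

import Mathlib

open Filter Topology

noncomputable section

/-- The ℓ² norm of a complex sequence (junk value if not square-summable). -/
def l2norm (x : ℕ → ℂ) : ℝ := Real.sqrt (∑' i, ‖x i‖ ^ 2)

/-- The Kalton–Peck map `KP^k`: its `i`-th entry is
`(2^k/k!) · xᵢ · (log(|xᵢ|/‖x‖₂))^k` when `x ≠ 0` and `xᵢ ≠ 0`, and `0` otherwise. -/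
def KP (k : ℕ) (x : ℕ → ℂ) : ℕ → ℂ := fun i =>
  letI := Classical.propDecidable (x = 0 ∨ x i = 0)
  if x = 0 ∨ x i = 0 then 0
  else (((2 : ℝ) ^ k / (Nat.factorial k : ℝ) *
      (Real.log (‖x i‖ / l2norm x)) ^ k : ℝ) : ℂ) * x i

/-- The reduced tuple `(x₁ − KP^{n−1} xₙ, …, x_{n−1} − KP¹ xₙ)`
(0-indexed, tuples of length `n+2` reduce to length `n+1`). -/
def reduceZ (n : ℕ) (x : Fin (n + 2) → ℕ → ℂ) : Fin (n + 1) → ℕ → ℂ :=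
  fun j => x j.castSucc - KP (n + 1 - (j : ℕ)) (x (Fin.last (n + 1)))

/-- Membership in the Rochberg space `𝔷_{n+1}` (tuples of length `n+1`). -/
def MemZ : (n : ℕ) → (Fin (n + 1) → ℕ → ℂ) → Prop
  | 0, x => Memℓp (x 0) 2
  | n + 1, x => Memℓp (x (Fin.last (n + 1))) 2 ∧ MemZ n (reduceZ n x)

/-- The natural quasinorm of the Rochberg space `𝔷_{n+1}`. -/
def QnormZ : (n : ℕ) → (Fin (n + 1) → ℕ → ℂ) → ℝ
  | 0, x => l2norm (x 0)
  | n + 1, x => QnormZ n (reduceZ n x) + l2norm (x (Fin.last (n + 1)))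

/-- A realization of the Rochberg space `𝔷_{n+1}` as a (complex) normed space `Z`:
a linear bijection onto the set of tuples belonging to `𝔷_{n+1}`, whose norm is
equivalent to the natural quasinorm. -/
structure RochbergRep (n : ℕ) (Z : Type*) [NormedAddCommGroup Z] [NormedSpace ℂ Z] where
  toFun : Z →ₗ[ℂ] (Fin (n + 1) → ℕ → ℂ)
  inj : Function.Injective toFun
  range_eq : Set.range toFun = {x | MemZ n x}
  C : ℝ
  one_le_C : 1 ≤ C
  norm_le : ∀ z, ‖z‖ ≤ C * QnormZ n (toFun z)
  qnorm_le : ∀ z, QnormZ n (toFun z) ≤ C * ‖z‖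

/-- A tuple is finitely supported if all its coordinate sequences are. -/
def FinSuppZ (n : ℕ) (x : Fin (n + 1) → ℕ → ℂ) : Prop :=
  ∀ j, (Function.support (x j)).Finite

/-- The pairing `⟨x,y⟩ₙ = Σ_{i+j=n+1} (−1)^i Σ_m x_i(m)·y_j(m)` (0-indexed form). -/
def pairZ (n : ℕ) (x y : Fin (n + 1) → ℕ → ℂ) : ℂ :=
  ∑ i : Fin (n + 1), (-1 : ℂ) ^ ((i : ℕ) + 1) * ∑ᶠ m, x i m * y i.rev m

/-- The tuple `(0,…,0,x)`. -/
def padLast (n : ℕ) (x : ℕ → ℂ) : Fin (n + 1) → ℕ → ℂ :=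
  fun j => if j = Fin.last n then x else 0

/-- `x ∈ Dom_{n+1}`, i.e. `(0,…,0,x) ∈ 𝔷_{n+1}`. -/
def MemDom (n : ℕ) (x : ℕ → ℂ) : Prop := MemZ n (padLast n x)

/-- The natural quasinorm of `Dom_{n+1}`: `‖(0,…,0,x)‖_{𝔷_{n+1}}`. -/
def DomQnorm (n : ℕ) (x : ℕ → ℂ) : ℝ := QnormZ n (padLast n x)

/-- A realization of `Dom_{n+1}` as a normed space. -/
structure DomRep (n : ℕ) (D : Type*) [NormedAddCommGroup D] [NormedSpace ℂ D] where
  toFun : D →ₗ[ℂ] (ℕ → ℂ)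
  inj : Function.Injective toFun
  range_eq : Set.range toFun = {x | MemDom n x}
  C : ℝ
  one_le_C : 1 ≤ C
  norm_le : ∀ z, ‖z‖ ≤ C * DomQnorm n (toFun z)
  qnorm_le : ∀ z, DomQnorm n (toFun z) ≤ C * ‖z‖

section Ops

variable {X Y : Type*} [NormedAddCommGroup X] [NormedSpace ℂ X]
  [NormedAddCommGroup Y] [NormedSpace ℂ Y]

/-- `Σ aₖ bₖ` converges to `x` (in the Schauder/partial-sum sense). -/
def ExpandsTo (b : ℕ → X) (a : ℕ → ℂ) (x : X) : Prop :=
  Tendsto (fun N => ∑ k ∈ Finset.range N, a k • b k) atTop (nhds x)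

/-- The series `Σ aₖ bₖ` converges. -/
def ConvergesWith (b : ℕ → X) (a : ℕ → ℂ) : Prop := ∃ x, ExpandsTo b a x

/-- `b` is a Schauder basis of `X`. -/
def IsSchauderBasis (b : ℕ → X) : Prop := ∀ x : X, ∃! a : ℕ → ℂ, ExpandsTo b a x

/-- `b` is a basic sequence: a Schauder basis of its closed linear span. -/
def IsBasicSeq (b : ℕ → X) : Prop :=
  ∀ x ∈ (Submodule.span ℂ (Set.range b)).topologicalClosure,
    ∃! a : ℕ → ℂ, ExpandsTo b a x

/-- Two basic sequences are equivalent: the same coefficient sequences give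
convergent series. -/
def EquivSeq (b : ℕ → X) (c : ℕ → Y) : Prop :=
  ∀ a : ℕ → ℂ, ConvergesWith b a ↔ ConvergesWith c a

/-- An unconditional (Schauder) basis. -/
def IsUnconditionalBasis (b : ℕ → X) : Prop :=
  IsSchauderBasis b ∧ ∀ (a : ℕ → ℂ) (x : X), ExpandsTo b a x →
    ∀ π : Equiv.Perm ℕ, ConvergesWith (fun k => b (π k)) (fun k => a (π k))

/-- `T` is bounded below on the subspace `M`. -/
def BoundedBelowOn (T : X →L[ℂ] Y) (M : Submodule ℂ X) : Prop :=
  ∃ c > 0, ∀ x ∈ M, c * ‖x‖ ≤ ‖T x‖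

/-- Strictly singular operator: bounded below on no infinite-dimensional closed
subspace. -/
def StrictlySingular (T : X →L[ℂ] Y) : Prop :=
  ∀ M : Submodule ℂ X, IsClosed (M : Set X) → ¬ FiniteDimensional ℂ M →
    ¬ BoundedBelowOn T M

/-- Strictly cosingular operator: composing with the quotient map by any closed
infinite-codimensional subspace is never surjective. -/
def StrictlyCosingular (T : X →L[ℂ] Y) : Prop :=
  ∀ N : Submodule ℂ Y, IsClosed (N : Set Y) → ¬ FiniteDimensional ℂ (Y ⧸ N) →
    ¬ Function.Surjective (fun x => N.mkQ (T x))

end Ops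

/-- The restriction of `a` to the interval `[p, q)`. -/
def truncI (a : ℕ → ℂ) (p q : ℕ) : ℕ → ℂ := fun i => if p ≤ i ∧ i < q then a i else 0

/-- The series `Σ aₖ eₖ` converges in `Dom_{n+1}` (Cauchy criterion with respect
to the natural quasinorm; equivalent to norm convergence since `Dom_{n+1}` is
complete and its norm is equivalent to the quasinorm). -/
def DomConverges (n : ℕ) (a : ℕ → ℂ) : Prop :=
  ∀ ε > 0, ∃ N : ℕ, ∀ p q : ℕ, N ≤ p → p ≤ q → DomQnorm n (truncI a p q) < ε

/-- `ωₙ(x) = sup { |⟨x,y⟩ₙ| : y finitely supported, ‖y‖ ≤ 1 }`. -/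
def omegaZ {n : ℕ} {Z : Type*} [NormedAddCommGroup Z] [NormedSpace ℂ Z]
    (e : RochbergRep n Z) (x : Z) : ℝ :=
  sSup { r : ℝ | ∃ y : Z, FinSuppZ n (e.toFun y) ∧ ‖y‖ ≤ 1 ∧
    r = ‖pairZ n (e.toFun x) (e.toFun y)‖ }

/-- The left shift `(x₁,…,xₙ) ↦ (x₂,…,xₙ,0)` on tuples. -/
def shiftTuple (m : ℕ) (x : Fin (m + 2) → ℕ → ℂ) : Fin (m + 2) → ℕ → ℂ :=
  fun j => if h : (j : ℕ) + 1 < m + 2 then x ⟨(j : ℕ) + 1, h⟩ else 0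

/-- Embedding on the left by padding with zeros on the right:
`(y₁,…,y_{k+1}) ↦ (y₁,…,y_{k+1},0,…,0)`. -/
def iotaTuple (n k : ℕ) (y : Fin (k + 1) → ℕ → ℂ) : Fin (n + 1) → ℕ → ℂ :=
  fun j => if h : (j : ℕ) < k + 1 then y ⟨(j : ℕ), h⟩ else 0

/-- Projection onto the last `k+1` coordinates. -/
def piTuple (n k : ℕ) (hk : k ≤ n) (x : Fin (n + 1) → ℕ → ℂ) : Fin (k + 1) → ℕ → ℂ :=
  fun j => x ⟨n - k + (j : ℕ), by have := j.isLt; omega⟩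

/-! Writing `ℓᵢ = log (|xᵢ| / ‖x‖₂)` and `ℓ'ᵢ` likewise, the binomial theorem collapses the
alternating sum at each index `i` to `xᵢ x'ᵢ (2 (ℓᵢ - ℓ'ᵢ))^m / m!`, where `m = n - 1`. With
`aᵢ = |xᵢ| / ‖x‖₂` and `bᵢ = |x'ᵢ| / ‖x'‖₂`, the estimate `|s|^m / m! ≤ cosh s` gives
`aᵢ bᵢ |log aᵢ - log bᵢ|^m / m! ≤ aᵢ bᵢ cosh (log aᵢ - log bᵢ) = (aᵢ² + bᵢ²) / 2`,
and these sum to at most `1`. -/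

namespace Real

lemma abs_pow_div_factorial_le_cosh (r : ℝ) (m : ℕ) : |r| ^ m / m.factorial ≤ cosh r := by
  obtain ⟨j, rfl | rfl⟩ := m.even_or_odd'
  · rw [(even_two_mul j).pow_abs]
    exact le_hasSum (hasSum_cosh r) j fun i _ => by rw [pow_mul]; positivity
  · have hterm := le_hasSum (hasSum_sinh |r|) j fun i _ => by positivity
    calc |r| ^ (2 * j + 1) / (2 * j + 1).factorial ≤ sinh |r| := hterm
      _ ≤ cosh |r| := (sinh_lt_cosh _).le
      _ = cosh r := cosh_abs r

lemma mul_mul_cosh_log_sub_log {a b : ℝ} (ha : 0 < a) (hb : 0 < b) :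
    a * b * cosh (log a - log b) = (a ^ 2 + b ^ 2) / 2 := by
  rw [cosh_eq, neg_sub, exp_sub, exp_sub, exp_log ha, exp_log hb]
  field_simp

lemma mul_mul_abs_log_sub_log_pow_div_factorial_le (m : ℕ) {a b : ℝ} (ha : 0 ≤ a) (hb : 0 ≤ b) :
    a * b * (|log a - log b| ^ m / m.factorial) ≤ (a ^ 2 + b ^ 2) / 2 := by
  rcases ha.eq_or_lt with rfl | ha
  · simp only [zero_mul]; positivity
  rcases hb.eq_or_lt with rfl | hb
  · simp only [mul_zero, zero_mul]; positivity
  calc a * b * (|log a - log b| ^ m / m.factorial) ≤ a * b * cosh (log a - log b) := by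
        gcongr; exact abs_pow_div_factorial_le_cosh _ m
    _ = (a ^ 2 + b ^ 2) / 2 := mul_mul_cosh_log_sub_log ha hb

end Real

lemma sum_range_pow_div_factorial_mul_pow_div_factorial {K : Type*} [Field K] [CharZero K]
    (u v : K) (m : ℕ) :
    ∑ k ∈ Finset.range (m + 1), u ^ (m - k) / (m - k).factorial * (v ^ k / k.factorial) =
      (u + v) ^ m / m.factorial := by
  rw [add_comm u, add_pow, Finset.sum_div]
  refine Finset.sum_congr rfl fun k hk => ?_
  rw [Nat.cast_choose K (Nat.lt_succ_iff.mp (Finset.mem_range.mp hk))]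
  field_simp
  exact (mul_div_mul_right _ _ (Nat.cast_ne_zero.mpr m.factorial_ne_zero)).symm

lemma l2norm_sq (x : ℕ → ℂ) :
    l2norm x ^ 2 = ∑' i, ‖x i‖ ^ 2 :=
  Real.sq_sqrt (tsum_nonneg fun _ => by positivity)

lemma sum_sq_norm_le_l2norm_sq {x : ℕ → ℂ} (hx : Summable fun i => ‖x i‖ ^ 2) (s : Finset ℕ) :
    ∑ i ∈ s, ‖x i‖ ^ 2 ≤ l2norm x ^ 2 :=
  l2norm_sq x ▸ hx.sum_le_tsum s fun _ _ => by positivity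

lemma l2norm_pos {x : ℕ → ℂ} (hx : Summable fun i => ‖x i‖ ^ 2) (h0 : x ≠ 0) :
    0 < l2norm x := by
  obtain ⟨i, hi⟩ := Function.ne_iff.mp h0
  refine Real.sqrt_pos.mpr (lt_of_lt_of_le ?_ (hx.le_tsum i fun _ _ => by positivity))
  exact pow_pos (norm_pos_iff.mpr hi) 2

lemma sum_sq_norm_div_l2norm_le_one {x : ℕ → ℂ} (hx : Summable fun i => ‖x i‖ ^ 2)
    (h0 : x ≠ 0) (s : Finset ℕ) : ∑ i ∈ s, (‖x i‖ / l2norm x) ^ 2 ≤ 1 := by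
  have hpos := l2norm_pos hx h0
  simp_rw [div_pow, ← Finset.sum_div]
  exact (div_le_one (by positivity)).mpr (sum_sq_norm_le_l2norm_sq hx s)

lemma summable_sq_norm_of_finite_support {x : ℕ → ℂ} (hx : (Function.support x).Finite) :
    Summable fun i => ‖x i‖ ^ 2 :=
  summable_of_hasFiniteSupport <| hx.subset fun i hi h => hi (by simp [h])

def logRatio (x : ℕ → ℂ) (i : ℕ) : ℝ := Real.log (‖x i‖ / l2norm x)

lemma KP_apply (k : ℕ) (x : ℕ → ℂ) (i : ℕ) :
    KP k x i = ((2 * logRatio x i) ^ k / k.factorial : ℝ) * x i := by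
  by_cases h : x = 0 ∨ x i = 0
  · have hi : x i = 0 := h.elim (fun h => by simp [h]) id
    simp [KP, hi]
  · rw [KP, if_neg h, logRatio, mul_pow, mul_div_right_comm]

lemma sum_range_neg_one_pow_mul_KP_mul_KP (m : ℕ) (x x' : ℕ → ℂ) (i : ℕ) :
    ∑ k ∈ Finset.range (m + 1), (-1 : ℂ) ^ k * (KP (m - k) x i * KP k x' i) =
      ((2 * (logRatio x i - logRatio x' i)) ^ m / m.factorial : ℝ) * (x i * x' i) := by
  have hbinom := sum_range_pow_div_factorial_mul_pow_div_factorial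
    (2 * logRatio x i : ℂ) (-(2 * logRatio x' i)) m
  simp_rw [KP_apply, neg_pow (2 * (logRatio x' i : ℂ))] at *
  rw [← sub_eq_add_neg] at hbinom
  push_cast
  rw [mul_sub, ← hbinom, Finset.sum_mul]
  refine Finset.sum_congr rfl fun k _ => ?_
  ring

lemma finsum_KP_mul_KP_eq_sum {x : ℕ → ℂ} (hx : (Function.support x).Finite) (k l : ℕ)
    (x' : ℕ → ℂ) : ∑ᶠ i, KP k x i * KP l x' i = ∑ i ∈ hx.toFinset, KP k x i * KP l x' i :=
  finsum_eq_sum_of_support_subset _ fun i hi => by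
    rw [Set.Finite.coe_toFinset]
    intro h
    exact hi (show KP k x i * KP l x' i = 0 by rw [KP_apply, h, mul_zero, zero_mul])

lemma sum_range_neg_one_pow_mul_finsum_KP_mul_KP (m : ℕ) {x : ℕ → ℂ}
    (hx : (Function.support x).Finite) (x' : ℕ → ℂ) :
    ∑ k ∈ Finset.range (m + 1), (-1 : ℂ) ^ k * ∑ᶠ i, KP (m - k) x i * KP k x' i =
      ∑ i ∈ hx.toFinset,
        ((2 * (logRatio x i - logRatio x' i)) ^ m / m.factorial : ℝ) * (x i * x' i) := by
  simp_rw [finsum_KP_mul_KP_eq_sum hx, Finset.mul_sum]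
  rw [Finset.sum_comm]
  simp_rw [sum_range_neg_one_pow_mul_KP_mul_KP]

lemma norm_logRatio_term_le (m : ℕ) {x x' : ℕ → ℂ} (hx : 0 < l2norm x) (hx' : 0 < l2norm x')
    (i : ℕ) :
    ‖(((2 * (logRatio x i - logRatio x' i)) ^ m / m.factorial : ℝ) : ℂ) * (x i * x' i)‖ ≤
      2 ^ m * (l2norm x * l2norm x' *
        (((‖x i‖ / l2norm x) ^ 2 + (‖x' i‖ / l2norm x') ^ 2) / 2)) := by
  have hratio := Real.mul_mul_abs_log_sub_log_pow_div_factorial_le m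
    (div_nonneg (norm_nonneg (x i)) hx.le) (div_nonneg (norm_nonneg (x' i)) hx'.le)
  rw [norm_mul, Complex.norm_real, norm_mul, Real.norm_eq_abs, abs_div, abs_pow, abs_mul,
    Nat.abs_cast, abs_two, mul_pow, mul_div_assoc, mul_assoc]
  refine mul_le_mul_of_nonneg_left ?_ (by positivity)
  calc |logRatio x i - logRatio x' i| ^ m / m.factorial * (‖x i‖ * ‖x' i‖)
      = l2norm x * l2norm x' * (‖x i‖ / l2norm x * (‖x' i‖ / l2norm x') *
          (|logRatio x i - logRatio x' i| ^ m / m.factorial)) := by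
        field_simp
    _ ≤ _ := by gcongr; exact hratio

theorem kp_pairing_bound_general (n : ℕ) (x x' : ℕ → ℂ)
    (hx : x ≠ 0) (hx' : x' ≠ 0)
    (hfx : (Function.support x).Finite) (hfx' : (Function.support x').Finite) :
    ‖∑ k ∈ Finset.range n,
        (-1 : ℂ) ^ k * ∑ᶠ i, KP (n - 1 - k) x i * KP k x' i‖
      ≤ 2 ^ (n - 1) * l2norm x * l2norm x' := by
  rcases n with _ | m
  · simp only [Finset.range_zero, Finset.sum_empty, norm_zero]
    exact mul_nonneg (mul_nonneg (by positivity) (Real.sqrt_nonneg _)) (Real.sqrt_nonneg _)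
  have hsx := summable_sq_norm_of_finite_support hfx
  have hsx' := summable_sq_norm_of_finite_support hfx'
  have hN := l2norm_pos hsx hx
  have hN' := l2norm_pos hsx' hx'
  have hA := sum_sq_norm_div_l2norm_le_one hsx hx hfx.toFinset
  have hB := sum_sq_norm_div_l2norm_le_one hsx' hx' hfx.toFinset
  simp only [Nat.add_sub_cancel]
  rw [sum_range_neg_one_pow_mul_finsum_KP_mul_KP m hfx]
  calc _ ≤ _ := norm_sum_le _ _
    _ ≤ ∑ i ∈ hfx.toFinset, 2 ^ m * (l2norm x * l2norm x' *
          (((‖x i‖ / l2norm x) ^ 2 + (‖x' i‖ / l2norm x') ^ 2) / 2)) :=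
        Finset.sum_le_sum fun i _ => norm_logRatio_term_le m hN hN' i
    _ ≤ 2 ^ m * (l2norm x * l2norm x' * 1) := by
        rw [← Finset.mul_sum, ← Finset.mul_sum, ← Finset.sum_div, Finset.sum_add_distrib]
        gcongr
        linarith
    _ = 2 ^ m * l2norm x * l2norm x' := by ring

/-- For every `n ≥ 1` and nonzero finitely supported
`x, x' ∈ ℓ²`:
`|Σ_{k=0}^{n−1} (−1)^k Σ_i (KP^{n−1−k} x)(i)·(KP^k x')(i)| ≤ 2^{n−1}·‖x‖₂·‖x'‖₂`. -/
theorem kp_pairing_bound (n : ℕ) (hn : 1 ≤ n) (x x' : ℕ → ℂ)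
    (hx : x ≠ 0) (hx' : x' ≠ 0)
    (hfx : (Function.support x).Finite) (hfx' : (Function.support x').Finite) :
    ‖∑ k ∈ Finset.range n,
        (-1 : ℂ) ^ k * ∑ᶠ i, KP (n - 1 - k) x i * KP k x' i‖
      ≤ 2 ^ (n - 1) * l2norm x * l2norm x' :=
  kp_pairing_bound_general n x x' hx hx' hfx hfx'
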